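/- On the open set U = { x ∈ ℝ⁴ : x₃ > 0 } (coordinates x⁰,x¹,x²,x³) define four covectors σ⁰ = (x₃)^{−2}·(dx⁰ + x²dx¹), σ¹ = (x₃)^{−1}dx¹, σ² = (x₃)^{−1}dx², σ³ = (x₃)^{−1}dx³, i.e. σ⁰ = ((x₃)^{−2}, (x₃)^{−2}x², 0, 0), σ¹ = (0, (x₃)^{−1}, 0, 0), σ² = (0, 0, (x₃)^{−1}, 0), σ³ = (0, 0, 0, (x₃)^{−1}) in the coordinate coframe. Let g be the symmetric matrix with nonzero components g₀₀ = 1/x₃, g₀₁ = g₁₀ = x²/x₃, g₁₁ = x₃ + (x²)²/x₃, g₂₂ = x₃, g₃₃ = x₃. Then at every point of U and for all a, b ∈ {0,1,2,3}: g_{ab} = (x₃)³ · Σ_{c=0}^{3} σ^c_a · σ^c_b. -/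
import Mathlib

/-- The coframe `σ⁰ = x₃⁻²(dx⁰ + x²dx¹)`, `σ¹ = x₃⁻¹dx¹`, `σ² = x₃⁻¹dx²`, `σ³ = x₃⁻¹dx³`
on `{x₃ > 0}`; `coframeGH k x b` is the `b`-th component of `σᵏ` at `x`. -/
noncomputable def coframeGH : Fin 4 → (Fin 4 → ℝ) → Fin 4 → ℝ :=
  ![fun x => ![(x 3) ^ (-2 : ℤ), (x 3) ^ (-2 : ℤ) * x 2, 0, 0],
    fun x => ![0, (x 3)⁻¹, 0, 0],
    fun x => ![0, 0, (x 3)⁻¹, 0],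
    fun x => ![0, 0, 0, (x 3)⁻¹]]

/-- The component matrix of the Gibbons–Hawking metric with potential `V = x₃`. -/
noncomputable def gGH (x : Fin 4 → ℝ) : Fin 4 → Fin 4 → ℝ :=
  !![1 / x 3,       x 2 / x 3,                 0,   0;
     x 2 / x 3,     x 3 + (x 2) ^ 2 / x 3,     0,   0;
     0,             0,                         x 3, 0;
     0,             0,                         0,   x 3]

/-- Conformal factorization of the Gibbons–Hawking domain-wall metric:
`g_{ab} = (x₃)³ Σ_c σ^c_a σ^c_b` on `{x₃ > 0}`. -/
theorem gibbons_hawking_conformal_factorization :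
    ∀ x : Fin 4 → ℝ, x 3 > 0 → ∀ a b : Fin 4,
      gGH x a b = (x 3) ^ 3 * ∑ c : Fin 4, coframeGH c x a * coframeGH c x b := by
  intro x hx a b
  have h : x 3 ≠ 0 := ne_of_gt hx
  fin_cases a <;> fin_cases b <;>
    simp [gGH, coframeGH, Fin.sum_univ_four, zpow_neg, zpow_ofNat, Matrix.vecHead, Matrix.vecTail] <;>
    field_simp <;> ring
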